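/- Let t_r denote the smallest real number such that the probability that all of r i.i.d. draws from distribution D are at most t_r equals 1/2 (the median of the maximum of r draws). If lim_{n→∞} t_n/t_{2n} < 1, then lim_{n→∞} E[X_{(2)}^n / X_{(1)}^n] < 1, where X_{(1)}^n and X_{(2)}^n are the largest and second-largest of n i.i.d. draws from D. -/

import Mathlib

open MeasureTheory Filter Real

/-- The `r`-th largest value among `x 0, ..., x (n-1)` (equals `0` by convention
when `r > n` or `n = 0`). -/
noncomputable def kthLargest {n : ℕ} (x : Fin n → ℝ) (r : ℕ) : ℝ :=
  sSup {t : ℝ | r ≤ (Finset.univ.filter (fun i => t ≤ x i)).card}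

/-- The joint distribution of `n` i.i.d. draws from `μ`. -/
noncomputable def iidMeasure (μ : Measure ℝ) [SigmaFinite μ] (n : ℕ) : Measure (Fin n → ℝ) :=
  Measure.pi fun _ => μ

/-- `E[X_{(k+1)} / X_{(1)}]` for `n` i.i.d. draws from `μ` (the ratio is `0` when
`X_{(1)} = 0`, by the division-by-zero convention). -/
noncomputable def ratioExp (μ : Measure ℝ) [SigmaFinite μ] (n k : ℕ) : ℝ :=
  ∫ x, kthLargest x (k + 1) / kthLargest x 1 ∂(iidMeasure μ n)

set_option linter.unusedSectionVars false

lemma sup'_measurable {ι α : Type*} [MeasurableSpace α] (s : Finset ι) (H : s.Nonempty)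
    (f : ι → α → ℝ) (hf : ∀ i, Measurable (f i)) :
    Measurable (fun a => s.sup' H (fun i => f i a)) := by
  induction H using Finset.Nonempty.cons_induction with
  | singleton i => simpa using hf i
  | cons i s hi hs ih =>
      rw [show (fun a => (Finset.cons i s hi).sup' (Finset.cons_nonempty hi) (fun j => f j a))
          = (fun a => max (f i a) (s.sup' hs (fun j => f j a))) from
        funext fun a => Finset.sup'_cons hs (fun j => f j a)]
      exact (hf i).max ih

lemma kthLargest_one {n : ℕ} (hn : 0 < n) (x : Fin n → ℝ) :
    kthLargest x 1 = Finset.univ.sup' (Finset.univ_nonempty_iff.2 ⟨⟨0, hn⟩⟩) x := by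
  have : {t : ℝ | 1 ≤ (Finset.univ.filter (fun i => t ≤ x i)).card}
      = Set.Iic (Finset.univ.sup' (Finset.univ_nonempty_iff.2 ⟨⟨0, hn⟩⟩) x) := by
    ext t
    simp only [Set.mem_setOf_eq, Set.mem_Iic, Finset.le_sup'_iff, Finset.one_le_card,
      Finset.filter_nonempty_iff]
  rw [kthLargest, this, csSup_Iic]

lemma offdiag_nonempty {n : ℕ} (hn : 2 ≤ n) :
    (Finset.univ : Finset (Fin n)).offDiag.Nonempty := by
  rw [← Finset.card_pos, Finset.offDiag_card]
  simp only [Finset.card_univ, Fintype.card_fin]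
  have h2 : 2 * n ≤ n * n := Nat.mul_le_mul_right n hn
  omega

lemma kthLargest_two {n : ℕ} (hn : 2 ≤ n) (x : Fin n → ℝ) :
    kthLargest x 2 = (Finset.univ.offDiag).sup'
      (offdiag_nonempty hn)
      (fun p => min (x p.1) (x p.2)) := by
  have : {t : ℝ | 2 ≤ (Finset.univ.filter (fun i => t ≤ x i)).card}
      = Set.Iic ((Finset.univ.offDiag).sup'
        (offdiag_nonempty hn)
        (fun p => min (x p.1) (x p.2))) := by
    ext t
    simp only [Set.mem_setOf_eq, Set.mem_Iic, Finset.le_sup'_iff, Finset.mem_offDiag,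
      le_min_iff]
    constructor
    · intro h
      obtain ⟨a, ha, b, hb, hab⟩ := Finset.one_lt_card.1 h
      simp only [Finset.mem_filter] at ha hb
      exact ⟨(a, b), ⟨Finset.mem_univ _, Finset.mem_univ _, hab⟩, ha.2, hb.2⟩
    · rintro ⟨⟨a, b⟩, ⟨-, -, hab⟩, h1, h2⟩
      refine Finset.one_lt_card.2 ⟨a, ?_, b, ?_, hab⟩ <;>
        simp [Finset.mem_filter, h1, h2]
  rw [kthLargest, this, csSup_Iic]

variable {μ : Measure ℝ} [IsProbabilityMeasure μ]

lemma F_le_one (s : ℝ) : (μ (Set.Iic s)).toReal ≤ 1 := by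
  have h := prob_le_one (μ := μ) (s := Set.Iic s)
  calc (μ (Set.Iic s)).toReal ≤ (1 : ENNReal).toReal :=
        ENNReal.toReal_mono (by simp) h
    _ = 1 := by simp

lemma F_mono {a b : ℝ} (hab : a ≤ b) : (μ (Set.Iic a)).toReal ≤ (μ (Set.Iic b)).toReal :=
  ENNReal.toReal_mono (measure_ne_top _ _) (measure_mono (Set.Iic_subset_Iic.2 hab))

lemma t_nonneg (hpos : μ (Set.Iio 0) = 0) (t : ℕ → ℝ)
    (ht : ∀ r : ℕ, 1 ≤ r → ((μ (Set.Iic (t r))).toReal) ^ r = 1 / 2)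
    {r : ℕ} (hr : 1 ≤ r) : 0 ≤ t r := by
  by_contra h
  push_neg at h
  have h0 : μ (Set.Iic (t r)) = 0 :=
    measure_mono_null (fun y hy => lt_of_le_of_lt hy h) hpos
  have := ht r hr
  rw [h0] at this
  simp [zero_pow (by omega : r ≠ 0)] at this

lemma t_lt (t : ℕ → ℝ)
    (ht : ∀ r : ℕ, 1 ≤ r → ((μ (Set.Iic (t r))).toReal) ^ r = 1 / 2)
    {r s : ℕ} (hr : 1 ≤ r) (hrs : r < s) : t r < t s := by
  by_contra h
  push_neg at h
  set a := (μ (Set.Iic (t r))).toReal with ha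
  set b := (μ (Set.Iic (t s))).toReal with hb
  have hba : b ≤ a := F_mono h
  have ha1 : a ≤ 1 := F_le_one _
  have ha0 : (0:ℝ) ≤ a := ENNReal.toReal_nonneg
  have hb0 : (0:ℝ) ≤ b := ENNReal.toReal_nonneg
  have h1 : (1:ℝ)/2 = b ^ s := (ht s (by omega)).symm
  have h2 : b ^ s ≤ a ^ s := pow_le_pow_left₀ hb0 hba s
  have h3 : a ^ s = a ^ r * a ^ (s - r) := by
    rw [← pow_add]; congr 1; omega
  have h4 : a ^ (s - r) ≤ 1 := pow_le_one₀ ha0 ha1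
  have h5 : a ^ r = 1/2 := ht r hr
  -- 1/2 ≤ (1/2) * a^(s-r) ≤ 1/2, so a^(s-r) = 1
  have h6 : (1:ℝ) ≤ a ^ (s - r) := by nlinarith [h1, h2, h3.symm ▸ h2]
  have h7 : a ^ (s - r) = 1 := le_antisymm h4 h6
  have h8 : a = 1 := by
    have hsr : s - r ≠ 0 := by omega
    rcases pow_eq_one_iff_cases.1 h7 with h | h | h
    · omega
    · exact h
    · nlinarith [h.1]
  rw [h8] at h5; norm_num at h5



instance iid_prob (μ : Measure ℝ) [IsProbabilityMeasure μ] (n : ℕ) : IsProbabilityMeasure (iidMeasure μ n) := by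
  unfold iidMeasure; infer_instance

lemma pi_all_le (μ : Measure ℝ) [IsProbabilityMeasure μ] (n : ℕ) (c : ℝ) :
    iidMeasure μ n {x : Fin n → ℝ | ∀ i, x i ≤ c} = μ (Set.Iic c) ^ n := by
  have h : {x : Fin n → ℝ | ∀ i, x i ≤ c} = Set.pi Set.univ (fun _ => Set.Iic c) := by
    ext x; simp [Set.mem_pi, Pi.le_def]
  rw [h, iidMeasure, Measure.pi_pi, Finset.prod_const, Finset.card_univ, Fintype.card_fin]

lemma pi_all_ge (μ : Measure ℝ) [IsProbabilityMeasure μ] (n : ℕ) (hpos : μ (Set.Iio 0) = 0) :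
    iidMeasure μ n {x : Fin n → ℝ | ∀ i, 0 ≤ x i} = 1 := by
  have h : {x : Fin n → ℝ | ∀ i, 0 ≤ x i} = Set.pi Set.univ (fun _ => Set.Ici 0) := by
    ext x; simp [Set.mem_pi, Pi.le_def]
  have h1 : μ (Set.Ici (0:ℝ)) = 1 := by
    rw [← Set.compl_Iio, measure_compl measurableSet_Iio (measure_ne_top _ _), hpos,
      measure_univ, tsub_zero]
  rw [h, iidMeasure, Measure.pi_pi]
  simp [h1]

lemma pi_pair {μ : Measure ℝ} [IsProbabilityMeasure μ] {n : ℕ} {i j : Fin n} (hij : i ≠ j) (c : ℝ) :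
    iidMeasure μ n {x : Fin n → ℝ | c < x i ∧ c < x j} = μ (Set.Ioi c) ^ 2 := by
  classical
  set s : Fin n → Set ℝ :=
    Function.update (Function.update (fun _ => Set.univ) i (Set.Ioi c)) j (Set.Ioi c) with hs
  have hset : {x : Fin n → ℝ | c < x i ∧ c < x j} = Set.pi Set.univ s := by
    ext x
    simp only [Set.mem_setOf_eq, Set.mem_pi, Set.mem_univ, forall_true_left]
    constructor
    · rintro ⟨h1, h2⟩ k
      by_cases hkj : k = j
      · subst hkj; simp [hs, Function.update_self, h2]
      · by_cases hki : k = i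
        · subst hki; simp [hs, Function.update_of_ne hkj, Function.update_self, h1]
        · simp [hs, Function.update_of_ne hkj, Function.update_of_ne hki]
    · intro h
      refine ⟨?_, ?_⟩
      · have := h i
        simpa [hs, Function.update_of_ne hij, Function.update_self] using this
      · have := h j
        simpa [hs, Function.update_self] using this
  have hfun : (fun k => μ (s k)) =
      Function.update (Function.update (fun _ => (1:ENNReal)) i (μ (Set.Ioi c))) j
        (μ (Set.Ioi c)) := by
    funext k
    by_cases hkj : k = j
    · subst hkj; simp [hs, Function.update_self]
    · by_cases hki : k = i
      · subst hki
        simp [hs, Function.update_of_ne hkj, Function.update_self]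
      · simp [hs, Function.update_of_ne hkj, Function.update_of_ne hki]
  rw [hset, iidMeasure, Measure.pi_pi, hfun,
    Finset.prod_update_of_mem (Finset.mem_univ j),
    Finset.prod_update_of_mem (by simp [hij] : i ∈ Finset.univ \ {j})]
  simp [sq]

lemma card_lt_pairs (n : ℕ) : 2 * (Finset.univ.filter (fun p : Fin n × Fin n => p.1 < p.2)).card
    ≤ n * n := by
  classical
  set P := Finset.univ.filter (fun p : Fin n × Fin n => p.1 < p.2) with hP
  set Q := Finset.univ.filter (fun p : Fin n × Fin n => p.2 < p.1) with hQ
  have hcard : P.card = Q.card :=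
    Finset.card_bij' (fun p _ => (p.2, p.1)) (fun p _ => (p.2, p.1))
      (by intro p hp; simp only [hP, hQ, Finset.mem_filter, Finset.mem_univ, true_and] at hp ⊢
          exact hp)
      (by intro p hp; simp only [hP, hQ, Finset.mem_filter, Finset.mem_univ, true_and] at hp ⊢
          exact hp)
      (by intros; rfl) (by intros; rfl)
  have hdisj : Disjoint P Q := by
    rw [Finset.disjoint_left]
    intro p hp hq
    simp only [hP, hQ, Finset.mem_filter] at hp hq
    exact absurd hq.2 (not_lt.2 hp.2.le)
  have hunion : (P ∪ Q).card ≤ (Finset.univ : Finset (Fin n × Fin n)).card :=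
    Finset.card_le_card (Finset.subset_univ _)
  rw [Finset.card_union_of_disjoint hdisj] at hunion
  simp only [Finset.card_univ, Fintype.card_prod, Fintype.card_fin] at hunion
  omega

lemma pair_union_bound (μ : Measure ℝ) [IsProbabilityMeasure μ] (n : ℕ) (c : ℝ) :
    iidMeasure μ n (⋃ p ∈ Finset.univ.filter (fun p : Fin n × Fin n => p.1 < p.2),
      {x : Fin n → ℝ | c < x p.1 ∧ c < x p.2})
    ≤ (Finset.univ.filter (fun p : Fin n × Fin n => p.1 < p.2)).card * μ (Set.Ioi c) ^ 2 := by
  refine le_trans (measure_biUnion_finset_le _ _) ?_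
  have : ∀ p ∈ Finset.univ.filter (fun p : Fin n × Fin n => p.1 < p.2),
      iidMeasure μ n {x : Fin n → ℝ | c < x p.1 ∧ c < x p.2} = μ (Set.Ioi c) ^ 2 := by
    intro p hp
    simp only [Finset.mem_filter] at hp
    exact pi_pair (ne_of_lt hp.2) c
  rw [Finset.sum_congr rfl this, Finset.sum_const, nsmul_eq_mul]

set_option maxHeartbeats 2000000 in
lemma main_bound (μ : Measure ℝ) [IsProbabilityMeasure μ] (hpos : μ (Set.Iio 0) = 0)
    (t : ℕ → ℝ) (ht : ∀ r : ℕ, 1 ≤ r → ((μ (Set.Iic (t r))).toReal) ^ r = 1 / 2)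
    {n : ℕ} (hn : 2 ≤ n) (h0 : 0 ≤ t n) (h2 : 0 < t (2 * n)) (hqle : t n / t (2 * n) ≤ 1) :
    0 ≤ ratioExp μ n 1 ∧ ratioExp μ n 1 ≤ 1 - (1/20) * (1 - t n / t (2 * n)) := by
  have hn0 : 0 < n := by omega
  set q : ℝ := t n / t (2 * n) with hq
  have hq0 : 0 ≤ q := div_nonneg h0 h2.le
  set g : (Fin n → ℝ) → ℝ := fun x => kthLargest x 2 / kthLargest x 1 with hgdef
  have hne1 : (Finset.univ : Finset (Fin n)).Nonempty := Finset.univ_nonempty_iff.2 ⟨⟨0, hn0⟩⟩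
  have hne2 := offdiag_nonempty hn
  set M1 : (Fin n → ℝ) → ℝ := fun x => Finset.univ.sup' hne1 x with hM1
  set M2 : (Fin n → ℝ) → ℝ :=
    fun x => (Finset.univ.offDiag).sup' hne2 (fun p => min (x p.1) (x p.2)) with hM2
  have hgeq : ∀ x, g x = M2 x / M1 x := by
    intro x
    simp only [hgdef, hM1, hM2]
    rw [kthLargest_two hn, kthLargest_one hn0]
  -- sets
  set B : Set (Fin n → ℝ) := {x | ∀ i, 0 ≤ x i} with hBdef
  set P : Finset (Fin n × Fin n) := Finset.univ.filter (fun p => p.1 < p.2) with hP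
  set U : Set (Fin n → ℝ) :=
    ⋃ p ∈ P, {x : Fin n → ℝ | t n < x p.1 ∧ t n < x p.2} with hU
  set V : Set (Fin n → ℝ) := ⋃ i : Fin n, {x | t (2 * n) ≤ x i} with hV
  set A : Set (Fin n → ℝ) := B ∩ Uᶜ ∩ V with hA
  have hBm : MeasurableSet B := by
    have : B = ⋂ i : Fin n, (fun x : Fin n → ℝ => x i) ⁻¹' Set.Ici 0 := by
      ext x; simp [hBdef]
    rw [this]
    exact MeasurableSet.iInter fun i => (measurable_pi_apply i) measurableSet_Ici
  have hUm : MeasurableSet U := by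
    refine MeasurableSet.biUnion (Finset.countable_toSet _) fun p _ => ?_
    have : {x : Fin n → ℝ | t n < x p.1 ∧ t n < x p.2}
        = ((fun x : Fin n → ℝ => x p.1) ⁻¹' Set.Ioi (t n))
          ∩ ((fun x : Fin n → ℝ => x p.2) ⁻¹' Set.Ioi (t n)) := by
      ext x; simp [Set.mem_setOf_eq]
    rw [this]
    exact ((measurable_pi_apply p.1) measurableSet_Ioi).inter
      ((measurable_pi_apply p.2) measurableSet_Ioi)
  have hVm : MeasurableSet V :=
    MeasurableSet.iUnion fun i => (measurable_pi_apply i) measurableSet_Ici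
  have hAm : MeasurableSet A := ((hBm.inter hUm.compl).inter hVm)
  -- pointwise facts
  have hM2leM1 : ∀ x, M2 x ≤ M1 x := by
    intro x
    simp only [hM1, hM2]
    refine Finset.sup'_le _ _ fun p hp => ?_
    exact le_trans (min_le_left _ _) (Finset.le_sup' x (Finset.mem_univ p.1))
  have hB1 : ∀ x ∈ B, 0 ≤ M1 x := by
    intro x hx
    simp only [hM1]
    exact le_trans (hx ⟨0, hn0⟩) (Finset.le_sup' x (Finset.mem_univ _))
  have hB2 : ∀ x ∈ B, 0 ≤ M2 x := by
    intro x hx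
    obtain ⟨p, hp⟩ := hne2
    simp only [hM2]
    exact le_trans (le_min (hx p.1) (hx p.2))
      (Finset.le_sup' (fun p : Fin n × Fin n => min (x p.1) (x p.2)) hp)
  have hg01 : ∀ x ∈ B, 0 ≤ g x ∧ g x ≤ 1 := by
    intro x hx
    rw [hgeq]
    exact ⟨div_nonneg (hB2 x hx) (hB1 x hx), div_le_one_of_le₀ (hM2leM1 x) (hB1 x hx)⟩
  have hgA : ∀ x ∈ A, g x ≤ q := by
    rintro x ⟨⟨-, hxU⟩, hxV⟩
    have hk2 : M2 x ≤ t n := by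
      simp only [hM2]
      refine Finset.sup'_le _ _ fun p hp => ?_
      by_contra hcon
      push_neg at hcon
      rw [lt_min_iff] at hcon
      rw [Finset.mem_offDiag] at hp
      rcases lt_or_gt_of_ne hp.2.2 with hlt | hgt
      · refine hxU ?_
        simp only [hU, Set.mem_iUnion, Set.mem_setOf_eq]
        exact ⟨p, by simp [hP, hlt], hcon.1, hcon.2⟩
      · refine hxU ?_
        simp only [hU, Set.mem_iUnion, Set.mem_setOf_eq]
        exact ⟨(p.2, p.1), by simp [hP, hgt], hcon.2, hcon.1⟩
    have hk1 : t (2 * n) ≤ M1 x := by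
      obtain ⟨i, hi⟩ : ∃ i, t (2 * n) ≤ x i := by
        simpa [hV] using hxV
      simp only [hM1]
      exact le_trans hi (Finset.le_sup' x (Finset.mem_univ i))
    rw [hgeq]
    exact div_le_div₀ h0 hk2 h2 hk1
  -- a.e. membership in B
  have haeB : ∀ᵐ x ∂(iidMeasure μ n), x ∈ B := by
    rw [ae_iff]
    have hBc : {x : Fin n → ℝ | ¬ x ∈ B} = Bᶜ := rfl
    rw [hBc, prob_compl_eq_one_sub hBm]
    rw [show iidMeasure μ n B = 1 from pi_all_ge μ n hpos]
    simp
  -- measurability and integrability of g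
  have hgmeas : Measurable g := by
    have hgg : g = fun x => M2 x / M1 x := funext hgeq
    rw [hgg]
    simp only [hM1, hM2]
    exact Measurable.div
      (sup'_measurable _ hne2 (fun p (x : Fin n → ℝ) => min (x p.1) (x p.2))
        (fun p => (measurable_pi_apply p.1).min (measurable_pi_apply p.2)))
      (sup'_measurable _ hne1 (fun i (x : Fin n → ℝ) => x i) (fun i => measurable_pi_apply i))
  have hgint : Integrable g (iidMeasure μ n) := by
    refine ⟨hgmeas.aestronglyMeasurable, HasFiniteIntegral.of_bounded (C := 1) ?_⟩
    filter_upwards [haeB] with x hx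
    rcases hg01 x hx with ⟨h1, h2⟩
    rw [Real.norm_eq_abs, abs_of_nonneg h1]
    exact h2
  have hEnn : 0 ≤ ratioExp μ n 1 := by
    refine integral_nonneg_of_ae ?_
    filter_upwards [haeB] with x hx
    exact (hg01 x hx).1
  refine ⟨hEnn, ?_⟩
  set a : ℝ := (iidMeasure μ n A).toReal with ha
  have ha0 : 0 ≤ a := ENNReal.toReal_nonneg
  have ha1 : a ≤ 1 := by
    rw [ha]
    calc (iidMeasure μ n A).toReal ≤ (1 : ENNReal).toReal :=
          ENNReal.toReal_mono (by simp) prob_le_one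
      _ = 1 := by simp
  have hacompl : (iidMeasure μ n Aᶜ).toReal = 1 - a := by
    rw [prob_compl_eq_one_sub hAm, ENNReal.toReal_sub_of_le prob_le_one (by simp)]
    simp [ha]
  -- integral decomposition
  have hsplit : ratioExp μ n 1 = (∫ x in A, g x ∂(iidMeasure μ n))
      + (∫ x in Aᶜ, g x ∂(iidMeasure μ n)) := by
    rw [ratioExp]
    exact (integral_add_compl hAm hgint).symm
  have hIA : (∫ x in A, g x ∂(iidMeasure μ n)) ≤ q * a := by
    have h1 : (∫ x in A, g x ∂(iidMeasure μ n)) ≤ ∫ _ in A, q ∂(iidMeasure μ n) :=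
      setIntegral_mono_on hgint.integrableOn (integrable_const q).integrableOn hAm hgA
    rw [setIntegral_const, smul_eq_mul, measureReal_def] at h1
    linarith [h1]
  have hIAc : (∫ x in Aᶜ, g x ∂(iidMeasure μ n)) ≤ 1 - a := by
    have h1 : (∫ x in Aᶜ, g x ∂(iidMeasure μ n)) ≤ ∫ _ in Aᶜ, (1:ℝ) ∂(iidMeasure μ n) := by
      refine integral_mono_ae hgint.integrableOn (integrable_const 1) ?_
      filter_upwards [ae_restrict_of_ae haeB] with x hx
      exact (hg01 x hx).2
    rw [setIntegral_const, smul_eq_mul, mul_one, measureReal_def, hacompl] at h1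
    exact h1
  -- probability bound
  set F1 : ℝ := (μ (Set.Iic (t n))).toReal with hF1
  set F2 : ℝ := (μ (Set.Iic (t (2 * n)))).toReal with hF2
  set p : ℝ := (μ (Set.Ioi (t n))).toReal with hp
  have hp0 : 0 ≤ p := ENNReal.toReal_nonneg
  have hF10 : 0 ≤ F1 := ENNReal.toReal_nonneg
  have hF20 : 0 ≤ F2 := ENNReal.toReal_nonneg
  have hpF1 : F1 + p = 1 := by
    have := measure_add_measure_compl (μ := μ) (s := Set.Iic (t n)) measurableSet_Iic
    rw [Set.compl_Iic, measure_univ] at this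
    have h' := congrArg ENNReal.toReal this
    rw [ENNReal.toReal_add (measure_ne_top _ _) (measure_ne_top _ _)] at h'
    simpa using h'
  -- p ≤ log 2 / n
  have hlog2pos : (0:ℝ) < Real.log 2 := Real.log_pos (by norm_num)
  have hlogn : Real.log 2 / n ≤ Real.log 2 := by
    apply div_le_self hlog2pos.le
    exact_mod_cast hn0
  have hlog1 : Real.log 2 < 1 := by
    have := Real.log_two_lt_d9
    linarith
  have h1mlog : (0:ℝ) ≤ 1 - Real.log 2 / n := by linarith
  have hF1ge : 1 - Real.log 2 / n ≤ F1 := by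
    apply le_of_pow_le_pow_left₀ (by omega : n ≠ 0) hF10
    calc (1 - Real.log 2 / n) ^ n ≤ (Real.exp (-(Real.log 2 / n))) ^ n := by
          apply pow_le_pow_left₀ h1mlog
          have := Real.add_one_le_exp (-(Real.log 2 / n))
          linarith
      _ = Real.exp ((n : ℝ) * (-(Real.log 2 / n))) := (Real.exp_nat_mul _ n).symm
      _ = Real.exp (-(Real.log 2)) := by
          congr 1
          field_simp
      _ = 1 / 2 := by
          rw [Real.exp_neg, Real.exp_log (by norm_num : (0:ℝ) < 2)]
          norm_num
      _ = F1 ^ n := (ht n (by omega)).symm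
  have hple : p ≤ Real.log 2 / n := by linarith
  -- F2 ^ n ≤ 0.7072
  have hF2n : (F2 ^ n) ^ 2 = 1 / 2 := by
    rw [← pow_mul, mul_comm n 2]
    exact ht (2 * n) (by omega)
  have hF2nb : F2 ^ n ≤ 0.7072 := by
    nlinarith [pow_nonneg hF20 n, sq_nonneg (F2 ^ n - 0.7072)]
  -- card bound in ℝ
  have hcardR : 2 * (P.card : ℝ) ≤ (n : ℝ) * n := by
    have := card_lt_pairs n
    rw [← hP] at this
    exact_mod_cast this
  have hUbound : (iidMeasure μ n U).toReal ≤ 0.2403 := by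
    have h1 : iidMeasure μ n U ≤ (P.card : ENNReal) * μ (Set.Ioi (t n)) ^ 2 := by
      rw [hU, hP]
      exact pair_union_bound μ n (t n)
    have hne : ((P.card : ENNReal) * μ (Set.Ioi (t n)) ^ 2) ≠ ⊤ :=
      ENNReal.mul_ne_top (by simp) (ENNReal.pow_ne_top (measure_ne_top _ _))
    have h2 := ENNReal.toReal_mono hne h1
    rw [ENNReal.toReal_mul, ENNReal.toReal_pow, ENNReal.toReal_natCast] at h2
    rw [← hp] at h2
    refine le_trans h2 ?_
    have hps : p ^ 2 ≤ (Real.log 2 / n) ^ 2 := pow_le_pow_left₀ hp0 hple 2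
    have hnR : (0:ℝ) < n := by exact_mod_cast hn0
    have hlogd : Real.log 2 < 0.6931471808 := Real.log_two_lt_d9
    have key : (P.card : ℝ) * p ^ 2 ≤ ((n:ℝ) * n / 2) * (Real.log 2 / n) ^ 2 := by
      have := mul_le_mul_of_nonneg_left hps (Nat.cast_nonneg P.card)
      have h3 : (P.card : ℝ) * (Real.log 2 / n) ^ 2 ≤ ((n:ℝ) * n / 2) * (Real.log 2 / n) ^ 2 := by
        apply mul_le_mul_of_nonneg_right _ (sq_nonneg _)
        linarith
      linarith
    have heq : ((n:ℝ) * n / 2) * (Real.log 2 / n) ^ 2 = (Real.log 2) ^ 2 / 2 := by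
      field_simp
    rw [heq] at key
    nlinarith [hlog2pos]
  have hVbound : (iidMeasure μ n Vᶜ).toReal ≤ 0.7072 := by
    have hsub : Vᶜ ⊆ {x : Fin n → ℝ | ∀ i, x i ≤ t (2 * n)} := by
      intro x hx i
      simp only [hV, Set.mem_compl_iff, Set.mem_iUnion, Set.mem_setOf_eq, not_exists,
        not_le] at hx
      exact (hx i).le
    have h1 : iidMeasure μ n Vᶜ ≤ μ (Set.Iic (t (2 * n))) ^ n :=
      le_trans (measure_mono hsub) (le_of_eq (pi_all_le μ n (t (2 * n))))
    have h2 := ENNReal.toReal_mono (ENNReal.pow_ne_top (measure_ne_top _ _)) h1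
    rw [ENNReal.toReal_pow] at h2
    rw [← hF2] at h2
    exact le_trans h2 hF2nb
  have hBc0 : (iidMeasure μ n Bᶜ).toReal = 0 := by
    rw [prob_compl_eq_one_sub hBm, show iidMeasure μ n B = 1 from pi_all_ge μ n hpos]
    simp
  have hAc : (iidMeasure μ n Aᶜ).toReal ≤ 0.9475 := by
    have hsub : Aᶜ ⊆ (Bᶜ ∪ U) ∪ Vᶜ := by
      intro x hx
      rw [hA] at hx
      simp only [Set.mem_compl_iff, Set.mem_inter_iff, not_and_or, not_not] at hx
      rcases hx with (h | h) | h
      · exact Or.inl (Or.inl h)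
      · exact Or.inl (Or.inr (by simpa using h))
      · exact Or.inr h
    have h1 : iidMeasure μ n Aᶜ ≤ iidMeasure μ n Bᶜ + iidMeasure μ n U + iidMeasure μ n Vᶜ :=
      le_trans (measure_mono hsub)
        (le_trans (measure_union_le _ _) (add_le_add (measure_union_le _ _) le_rfl))
    have hfin : iidMeasure μ n Bᶜ + iidMeasure μ n U + iidMeasure μ n Vᶜ ≠ ⊤ := by
      refine ENNReal.add_ne_top.2 ⟨ENNReal.add_ne_top.2 ⟨?_, ?_⟩, ?_⟩ <;>
        exact measure_ne_top _ _
    have h2 := ENNReal.toReal_mono hfin h1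
    rw [ENNReal.toReal_add (ENNReal.add_ne_top.2 ⟨measure_ne_top _ _, measure_ne_top _ _⟩)
      (measure_ne_top _ _), ENNReal.toReal_add (measure_ne_top _ _) (measure_ne_top _ _)] at h2
    rw [hBc0] at h2
    linarith [hUbound, hVbound]
  have hage : (1:ℝ)/20 ≤ a := by
    rw [hacompl] at hAc
    linarith
  -- final arithmetic
  rw [hsplit]
  have : q * a + (1 - a) ≤ 1 - (1/20) * (1 - q) := by
    nlinarith [mul_le_mul_of_nonneg_right hage (by linarith : (0:ℝ) ≤ 1 - q)]
  linarith [hIA, hIAc]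

theorem stmt1 (μ : Measure ℝ) [IsProbabilityMeasure μ] (hpos : μ (Set.Iio 0) = 0)
    (t : ℕ → ℝ)
    (ht : ∀ r : ℕ, 1 ≤ r → ((μ (Set.Iic (t r))).toReal) ^ r = 1 / 2)
    (htmin : ∀ r : ℕ, 1 ≤ r → ∀ s : ℝ, ((μ (Set.Iic s)).toReal) ^ r = 1 / 2 → t r ≤ s)
    (L : ℝ) (hL : L < 1)
    (hlim : Tendsto (fun n : ℕ => t n / t (2 * n)) atTop (nhds L)) :
    limsup (fun n : ℕ => ratioExp μ n 1) atTop < 1 := by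
  set q : ℝ := (1 + L) / 2 with hqdef
  have hq1 : q < 1 := by rw [hqdef]; linarith
  have hLq : L < q := by rw [hqdef]; linarith
  have hKlt : 1 - (1/20) * (1 - q) < 1 := by nlinarith
  have ht1 : 0 ≤ t 1 := t_nonneg hpos t ht le_rfl
  have hev1 : ∀ᶠ n : ℕ in atTop, t n / t (2 * n) < q := hlim.eventually_lt_const hLq
  have hev2 : ∀ᶠ n : ℕ in atTop, 2 ≤ n := eventually_ge_atTop 2
  have hev : ∀ᶠ n : ℕ in atTop,
      0 ≤ ratioExp μ n 1 ∧ ratioExp μ n 1 ≤ 1 - (1/20) * (1 - q) := by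
    filter_upwards [hev1, hev2] with n hqn hn
    have h0 : 0 ≤ t n := t_nonneg hpos t ht (by omega)
    have h2 : 0 < t (2 * n) :=
      lt_of_le_of_lt ht1 (t_lt t ht le_rfl (by omega : 1 < 2 * n))
    have hqle : t n / t (2 * n) ≤ 1 := (hqn.trans hq1).le
    have hmb := main_bound μ hpos t ht hn h0 h2 hqle
    refine ⟨hmb.1, hmb.2.trans ?_⟩
    have : t n / t (2 * n) ≤ q := hqn.le
    linarith
  have hco : IsCoboundedUnder (· ≤ ·) atTop (fun n : ℕ => ratioExp μ n 1) :=
    isCoboundedUnder_le_of_eventually_le atTop (x := 0) (hev.mono fun n h => h.1)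
  have hls : limsup (fun n : ℕ => ratioExp μ n 1) atTop ≤ 1 - (1/20) * (1 - q) :=
    limsup_le_of_le hco (hev.mono fun n h => h.2)
  exact lt_of_le_of_lt hls hKlt
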